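/- Truth lemma for the canonical model of IMCalc: for all (Γ,n) ∈ W_{IMCalc} and all L-formulas φ, φ ∈ Γ if and only if M_{IMCalc},(Γ,n) ⊩ φ. -/
import Mathlib


/-
Common formalisation of the syntax and semantics of the intuitionistic
monotone modal logic IM, its generalised Hilbert calculi, intuitionistic
neighbourhood models, IFOM-structures, and related constructions.
-/

namespace IMPaper

/-- Formulas of the monotone modal language L. -/
inductive Formula : Type
  | prop : ℕ → Formula
  | bot  : Formula
  | and  : Formula → Formula → Formula
  | or   : Formula → Formula → Formula
  | imp  : Formula → Formula → Formula
  | box  : Formula → Formula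
  | dia  : Formula → Formula
deriving DecidableEq

/-- Negation: ¬φ abbreviates φ → ⊥. -/
def Formula.neg (φ : Formula) : Formula := φ.imp .bot

/-- Top: ⊤ abbreviates ⊥ → ⊥. -/
def Formula.top : Formula := Formula.bot.imp .bot

/-- Substitution of formulas for proposition letters. -/
def Formula.subst (σ : ℕ → Formula) : Formula → Formula
  | .prop i   => σ i
  | .bot      => .bot
  | .and φ ψ  => .and (φ.subst σ) (ψ.subst σ)
  | .or φ ψ   => .or (φ.subst σ) (ψ.subst σ)
  | .imp φ ψ  => .imp (φ.subst σ) (ψ.subst σ)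
  | .box φ    => .box (φ.subst σ)
  | .dia φ    => .dia (φ.subst σ)

private def pp0 : Formula := .prop 0
private def pp1 : Formula := .prop 1
private def pp2 : Formula := .prop 2

/-- A standard axiomatisation of intuitionistic propositional logic. -/
def IpcAx : Set Formula :=
  { Formula.imp pp0 (.imp pp1 pp0),
    Formula.imp (.imp pp0 (.imp pp1 pp2)) (.imp (.imp pp0 pp1) (.imp pp0 pp2)),
    Formula.imp (.and pp0 pp1) pp0,
    Formula.imp (.and pp0 pp1) pp1,
    Formula.imp pp0 (.imp pp1 (.and pp0 pp1)),
    Formula.imp pp0 (.or pp0 pp1),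
    Formula.imp pp1 (.or pp0 pp1),
    Formula.imp (.imp pp0 pp2) (.imp (.imp pp1 pp2) (.imp (.or pp0 pp1) pp2)),
    Formula.imp .bot pp0 }

/-- All substitution instances of a set of formulas. -/
def Instances (Ax : Set Formula) : Set Formula :=
  {φ | ∃ ψ ∈ Ax, ∃ σ, φ = ψ.subst σ}

/-- 𝒜x: all substitution instances of Ax together with all substitution
instances of the axioms of intuitionistic propositional logic. -/
def ScrAx (Ax : Set Formula) : Set Formula := Instances Ax ∪ Instances IpcAx

/-- The generalised Hilbert calculus GHC(Ax). -/
inductive GHC (Ax : Set Formula) : Set Formula → Formula → Prop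
  | el {Γ : Set Formula} {φ : Formula} : φ ∈ Γ → GHC Ax Γ φ
  | ax {Γ : Set Formula} {φ : Formula} : φ ∈ ScrAx Ax → GHC Ax Γ φ
  | mp {Γ : Set Formula} {φ ψ : Formula} :
      GHC Ax Γ φ → GHC Ax Γ (φ.imp ψ) → GHC Ax Γ ψ
  | monBox {Γ : Set Formula} {φ ψ : Formula} :
      GHC Ax ∅ (φ.imp ψ) → GHC Ax Γ ((Formula.box φ).imp (Formula.box ψ))
  | monDia {Γ : Set Formula} {φ ψ : Formula} :
      GHC Ax ∅ (φ.imp ψ) → GHC Ax Γ ((Formula.dia φ).imp (Formula.dia ψ))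

/-- The axioms (neg_a) and (I_◇) of the calculus IMCalc. -/
def IMAx : Set Formula :=
  { Formula.imp ((Formula.box pp0).and (Formula.dia pp0.neg)) .bot,
    Formula.imp ((Formula.box Formula.top).imp (Formula.dia pp0)) (Formula.dia pp0) }

/-- Derivability in the calculus IMCalc = GHC({(□p ∧ ◇¬p) → ⊥, (□⊤ → ◇p) → ◇p}). -/
def IMC : Set Formula → Formula → Prop := GHC IMAx

/-- An intuitionistic neighbourhood: a partial function W ⇀ 𝒫(W), encoded as a
domain together with a (total) value function whose values matter on the domain. -/
structure Nbhd (W : Type) where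
  dom : Set W
  val : W → Set W

/-- The data of an intuitionistic neighbourhood model. -/
structure INStruct (W : Type) where
  le : W → W → Prop
  N : Set (Nbhd W)
  V : ℕ → Set W

variable {W W' : Type}

/-- A set is upward closed w.r.t. the order of the structure. -/
def INStruct.Up (M : INStruct W) (s : Set W) : Prop :=
  ∀ ⦃w v : W⦄, M.le w v → w ∈ s → v ∈ s

/-- `M` is an intuitionistic neighbourhood model: the order is a partial order,
the domain of every neighbourhood is upward closed, and the valuation assigns
upward closed sets to proposition letters. -/
def INStruct.IsModel (M : INStruct W) : Prop :=
  IsPartialOrder W M.le ∧ (∀ a ∈ M.N, M.Up a.dom) ∧ ∀ i, M.Up (M.V i)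

/-- Truth of a formula at a world of an intuitionistic neighbourhood model. -/
def INStruct.sat (M : INStruct W) : Formula → W → Prop
  | .prop i, w  => w ∈ M.V i
  | .bot, _     => False
  | .and φ ψ, w => M.sat φ w ∧ M.sat ψ w
  | .or φ ψ, w  => M.sat φ w ∨ M.sat ψ w
  | .imp φ ψ, w => ∀ v, M.le w v → M.sat φ v → M.sat ψ v
  | .box φ, w   => ∃ a ∈ M.N, w ∈ a.dom ∧
      ∀ w', M.le w w' → ∀ v ∈ a.val w', M.sat φ v
  | .dia φ, w   => ∀ w', M.le w w' → ∀ a ∈ M.N, w' ∈ a.dom →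
      ∃ v ∈ a.val w', M.sat φ v

/-- Semantic consequence over the class of all intuitionistic neighbourhood models. -/
def INConseq (Γ : Set Formula) (φ : Formula) : Prop :=
  ∀ (W : Type) (M : INStruct W), M.IsModel →
    ∀ w : W, (∀ ψ ∈ Γ, M.sat ψ w) → M.sat φ w

/-- A coherent intuitionistic neighbourhood: conditions (N1) and (N2). -/
def INStruct.CoherentNbhd (M : INStruct W) (a : Nbhd W) : Prop :=
  (∀ ⦃w w' : W⦄, M.le w w' → w ∈ a.dom → ∀ v ∈ a.val w, ∃ v' ∈ a.val w', M.le v v') ∧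
  (∀ ⦃w : W⦄, w ∈ a.dom → ∀ v ∈ a.val w, ∀ v', M.le v v' →
      ∃ w', M.le w w' ∧ v' ∈ a.val w')

/-- A model is coherent if all its intuitionistic neighbourhoods are coherent. -/
def INStruct.Coherent (M : INStruct W) : Prop := ∀ a ∈ M.N, M.CoherentNbhd a

/-- Semantic consequence over the class of coherent intuitionistic neighbourhood models. -/
def CohConseq (Γ : Set Formula) (φ : Formula) : Prop :=
  ∀ (W : Type) (M : INStruct W), M.IsModel → M.Coherent →
    ∀ w : W, (∀ ψ ∈ Γ, M.sat ψ w) → M.sat φ w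

/-- The relation R: w R v iff v ∈ a(w) for some neighbourhood a of w. -/
def INStruct.R (M : INStruct W) (w v : W) : Prop :=
  ∃ a ∈ M.N, w ∈ a.dom ∧ v ∈ a.val w

/-- R~-Cartesian: w ≤~ v R~ w implies w = v (with ~ the equivalence closures). -/
def INStruct.RCartesian (M : INStruct W) : Prop :=
  ∀ w v, Relation.EqvGen M.le w v → Relation.EqvGen M.R v w → w = v

/-- N-Cartesian: w R~ v and w, v ∈ dom(a) imply a(w) = a(v). -/
def INStruct.NCartesian (M : INStruct W) : Prop :=
  ∀ a ∈ M.N, ∀ w v, Relation.EqvGen M.R w v → w ∈ a.dom → v ∈ a.dom →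
    a.val w = a.val v

/-- Cartesian: both R~-Cartesian and N-Cartesian. -/
def INStruct.Cartesian (M : INStruct W) : Prop := M.RCartesian ∧ M.NCartesian

/-- Isomorphism of intuitionistic neighbourhood structures. -/
def Isomorphic (M : INStruct W) (M' : INStruct W') : Prop :=
  ∃ (α : W → W') (ν : Nbhd W → Nbhd W'),
    Function.Bijective α ∧ Set.BijOn ν M.N M'.N ∧
    (∀ w v, M.le w v ↔ M'.le (α w) (α v)) ∧
    (∀ a ∈ M.N, ∀ w, w ∈ a.dom ↔ α w ∈ (ν a).dom) ∧
    (∀ a ∈ M.N, ∀ u ∈ a.dom, ∀ w, w ∈ a.val u ↔ α w ∈ (ν a).val (α u)) ∧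
    (∀ i w, w ∈ M.V i ↔ α w ∈ M'.V i)

end IMPaper
namespace IMPaper

/-- A prime theory: deductively closed (for IMCalc), has the disjunction
property, and is consistent. -/
def PrimeTheory (Γ : Set Formula) : Prop :=
  (∀ φ, IMC Γ φ → φ ∈ Γ) ∧
  (∀ φ ψ, Formula.or φ ψ ∈ Γ → φ ∈ Γ ∨ ψ ∈ Γ) ∧
  Formula.bot ∉ Γ

/-- A maximal prime theory: one not properly contained in any other prime theory. -/
def MaxPrime (Γ : Set Formula) : Prop :=
  PrimeTheory Γ ∧ ∀ Δ, PrimeTheory Δ → Γ ⊆ Δ → Δ = Γ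

/-- Worlds of the canonical model: pairs (Γ, n) with Γ a prime theory, where
n = 0 unless Γ is maximal. -/
def CanW : Type :=
  {p : Set Formula × ℕ // PrimeTheory p.1 ∧ (¬ MaxPrime p.1 → p.2 = 0)}

/-- The canonical order: (Γ,n) ⊂< (Γ',n') iff Γ ⊆ Γ' and n ≤ n'. -/
def canLe (p q : CanW) : Prop := p.1.1 ⊆ q.1.1 ∧ p.1.2 ≤ q.1.2

/-- The canonical neighbourhood a_φ, defined at (Γ,n) iff □φ ∈ Γ, with constant
value φ̃ = {(Δ,m) : φ ∈ Δ}. -/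
def canA (φ : Formula) : Nbhd CanW where
  dom := {p | Formula.box φ ∈ p.1.1}
  val := fun _ => {q | φ ∈ q.1.1}

/-- The canonical neighbourhood b_{ψ,Δ,m}: defined exactly on the upset of
(Δ,m), with value W ∖ ψ̃ at (Δ,m) itself and the full set strictly above. -/
def canB (ψ : Formula) (Δm : CanW) : Nbhd CanW where
  dom := {p | canLe Δm p}
  val := fun p => {q | p = Δm → ψ ∉ q.1.1}

/-- The canonical model of IMCalc. -/
def canStruct : INStruct CanW where
  le := canLe
  N := {b | (∃ φ, b = canA φ) ∨
        ∃ (ψ : Formula) (Δm : CanW), Formula.dia ψ ∉ Δm.1.1 ∧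
          Formula.box Formula.top ∈ Δm.1.1 ∧ b = canB ψ Δm}
  V := fun i => {p | Formula.prop i ∈ p.1.1}

end IMPaper
namespace IMPaper

open Formula

variable {Ax : Set Formula} {Γ Δ : Set Formula} {φ ψ χ : Formula}

private def s3 (a b c : Formula) : ℕ → Formula
  | 0 => a
  | 1 => b
  | _ => c

lemma ipc_inst {ψ : Formula} (h : ψ ∈ IpcAx) (σ : ℕ → Formula) :
    GHC Ax Γ (ψ.subst σ) := .ax (Or.inr ⟨ψ, h, σ, rfl⟩)

lemma axK : GHC Ax Γ (φ.imp (ψ.imp φ)) :=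
  ipc_inst (ψ := Formula.imp pp0 (.imp pp1 pp0)) (by simp [IpcAx]) (s3 φ ψ .bot)

lemma axS : GHC Ax Γ ((φ.imp (ψ.imp χ)).imp ((φ.imp ψ).imp (φ.imp χ))) :=
  ipc_inst (ψ := Formula.imp (.imp pp0 (.imp pp1 pp2)) (.imp (.imp pp0 pp1) (.imp pp0 pp2))) (by simp [IpcAx]) (s3 φ ψ χ)

lemma axAndL : GHC Ax Γ ((φ.and ψ).imp φ) :=
  ipc_inst (ψ := Formula.imp (.and pp0 pp1) pp0) (by simp [IpcAx]) (s3 φ ψ .bot)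

lemma axAndR : GHC Ax Γ ((φ.and ψ).imp ψ) :=
  ipc_inst (ψ := Formula.imp (.and pp0 pp1) pp1) (by simp [IpcAx]) (s3 φ ψ .bot)

lemma axAndI : GHC Ax Γ (φ.imp (ψ.imp (φ.and ψ))) :=
  ipc_inst (ψ := Formula.imp pp0 (.imp pp1 (.and pp0 pp1))) (by simp [IpcAx]) (s3 φ ψ .bot)

lemma axOrL : GHC Ax Γ (φ.imp (φ.or ψ)) :=
  ipc_inst (ψ := Formula.imp pp0 (.or pp0 pp1)) (by simp [IpcAx]) (s3 φ ψ .bot)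

lemma axOrR : GHC Ax Γ (ψ.imp (φ.or ψ)) :=
  ipc_inst (ψ := Formula.imp pp1 (.or pp0 pp1)) (by simp [IpcAx]) (s3 φ ψ .bot)

lemma axOrE : GHC Ax Γ ((φ.imp χ).imp ((ψ.imp χ).imp ((φ.or ψ).imp χ))) :=
  ipc_inst (ψ := Formula.imp (.imp pp0 pp2) (.imp (.imp pp1 pp2) (.imp (.or pp0 pp1) pp2))) (by simp [IpcAx]) (s3 φ ψ χ)

lemma axEfq : GHC Ax Γ (Formula.bot.imp φ) :=
  ipc_inst (ψ := Formula.imp .bot pp0) (by simp [IpcAx]) (s3 φ φ φ)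

lemma axNegA : GHC IMAx Γ (((Formula.box φ).and (Formula.dia φ.neg)).imp .bot) :=
  .ax (Or.inl ⟨Formula.imp ((Formula.box pp0).and (Formula.dia pp0.neg)) .bot,
    by simp [IMAx], fun _ => φ, rfl⟩)

lemma axIDia : GHC IMAx Γ
    (((Formula.box Formula.top).imp (Formula.dia φ)).imp (Formula.dia φ)) :=
  .ax (Or.inl ⟨Formula.imp ((Formula.box Formula.top).imp (Formula.dia pp0)) (Formula.dia pp0),
    by simp [IMAx], fun _ => φ, rfl⟩)

lemma imp_self' : GHC Ax Γ (φ.imp φ) :=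
  .mp (axK (ψ := φ)) (.mp (axK (ψ := φ.imp φ)) axS)

lemma weaken (h : GHC Ax Γ φ) (hs : Γ ⊆ Δ) : GHC Ax Δ φ := by
  induction h generalizing Δ with
  | el hm => exact .el (hs hm)
  | ax hm => exact .ax hm
  | mp _ _ ih1 ih2 => exact .mp (ih1 hs) (ih2 hs)
  | monBox h1 => exact .monBox h1
  | monDia h1 => exact .monDia h1

lemma deduction (h : GHC Ax (insert φ Γ) ψ) : GHC Ax Γ (φ.imp ψ) := by
  generalize hΓ : insert φ Γ = Γ' at h
  induction h generalizing Γ with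
  | el hm =>
    subst hΓ
    rcases hm with rfl | hm
    · exact imp_self'
    · exact .mp (.el hm) axK
  | ax hm => exact .mp (.ax hm) axK
  | mp _ _ ih1 ih2 => exact .mp (ih1 hΓ) (.mp (ih2 hΓ) axS)
  | monBox h1 => exact .mp (.monBox h1) axK
  | monDia h1 => exact .mp (.monDia h1) axK

lemma ghc_chain {C : Set (Set Formula)} (hC : IsChain (· ⊆ ·) C) (hne : C.Nonempty)
    (h : GHC Ax (⋃₀ C) φ) : ∃ Δ ∈ C, GHC Ax Δ φ := by
  generalize hΓ : ⋃₀ C = Γ' at h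
  induction h with
  | el hm =>
    subst hΓ
    obtain ⟨Δ, hΔ, hm⟩ := hm
    exact ⟨Δ, hΔ, .el hm⟩
  | ax hm => exact ⟨hne.choose, hne.choose_spec, .ax hm⟩
  | mp _ _ ih1 ih2 =>
    obtain ⟨Δ₁, hΔ₁, h1⟩ := ih1 hΓ
    obtain ⟨Δ₂, hΔ₂, h2⟩ := ih2 hΓ
    rcases eq_or_ne Δ₁ Δ₂ with rfl | hne'
    · exact ⟨Δ₁, hΔ₁, .mp h1 h2⟩
    · rcases hC hΔ₁ hΔ₂ hne' with hss | hss
      · exact ⟨Δ₂, hΔ₂, .mp (weaken h1 hss) h2⟩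
      · exact ⟨Δ₁, hΔ₁, .mp h1 (weaken h2 hss)⟩
  | monBox h1 => exact ⟨hne.choose, hne.choose_spec, .monBox h1⟩
  | monDia h1 => exact ⟨hne.choose, hne.choose_spec, .monDia h1⟩

lemma lindenbaum (h : ¬ IMC Γ ψ) :
    ∃ Δ, Γ ⊆ Δ ∧ PrimeTheory Δ ∧ ψ ∉ Δ := by
  set S : Set (Set Formula) := {Δ | Γ ⊆ Δ ∧ ¬ GHC IMAx Δ ψ} with hS
  obtain ⟨Δ, hΓΔ, hmax⟩ := zorn_subset_nonempty S
    (fun c hcS hc hcne => by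
      refine ⟨⋃₀ c, ⟨?_, ?_⟩, fun s hs => Set.subset_sUnion_of_mem hs⟩
      · exact (hcS hcne.choose_spec).1.trans (Set.subset_sUnion_of_mem hcne.choose_spec)
      · intro hd
        obtain ⟨Δ, hΔ, hd⟩ := ghc_chain hc hcne hd
        exact (hcS hΔ).2 hd)
    Γ ⟨subset_rfl, h⟩
  obtain ⟨⟨hΓΔ', hnd⟩, hub⟩ := hmax
  -- key: anything not forcing ψ when added must already be in Δ
  have key : ∀ χ, ¬ GHC IMAx (insert χ Δ) ψ → χ ∈ Δ := by
    intro χ hχ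
    have : insert χ Δ = Δ :=
      le_antisymm (hub ⟨hΓΔ'.trans (Set.subset_insert _ _), hχ⟩ (Set.subset_insert _ _))
        (Set.subset_insert _ _)
    rw [← this]; exact Set.mem_insert _ _
  have closed : ∀ χ, GHC IMAx Δ χ → χ ∈ Δ := by
    intro χ hd
    refine key χ (fun hk => hnd ?_)
    exact .mp hd (deduction hk)
  refine ⟨Δ, hΓΔ, ⟨closed, ?_, ?_⟩, fun hm => hnd (.el hm)⟩
  · intro a b hab
    by_contra hcon
    push_neg at hcon
    have ha : GHC IMAx (insert a Δ) ψ := by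
      by_contra hk; exact hcon.1 (key a hk)
    have hb : GHC IMAx (insert b Δ) ψ := by
      by_contra hk; exact hcon.2 (key b hk)
    exact hnd (.mp (.el hab) (.mp (deduction hb) (.mp (deduction ha) axOrE)))
  · intro hbot
    exact hnd (.mp (.el hbot) axEfq)

-- prime theory facts
lemma prime_mp {Γ} (hΓ : PrimeTheory Γ) (h1 : φ.imp ψ ∈ Γ) (h2 : φ ∈ Γ) : ψ ∈ Γ :=
  hΓ.1 _ (.mp (.el h2) (.el h1))

lemma prime_and {Γ} (hΓ : PrimeTheory Γ) : φ.and ψ ∈ Γ ↔ φ ∈ Γ ∧ ψ ∈ Γ := by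
  constructor
  · exact fun h => ⟨hΓ.1 _ (.mp (.el h) axAndL), hΓ.1 _ (.mp (.el h) axAndR)⟩
  · exact fun ⟨h1, h2⟩ => hΓ.1 _ (.mp (.el h2) (.mp (.el h1) axAndI))

lemma prime_or {Γ} (hΓ : PrimeTheory Γ) : φ.or ψ ∈ Γ ↔ φ ∈ Γ ∨ ψ ∈ Γ := by
  constructor
  · exact hΓ.2.1 _ _
  · rintro (h | h)
    · exact hΓ.1 _ (.mp (.el h) axOrL)
    · exact hΓ.1 _ (.mp (.el h) axOrR)

lemma canLe_refl (p : CanW) : canLe p p := ⟨subset_rfl, le_rfl⟩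

/-- world with theory Δ at level 0 -/
def mkW {Δ : Set Formula} (hΔ : PrimeTheory Δ) : CanW :=
  ⟨(Δ, 0), hΔ, fun _ => rfl⟩

lemma mkW_thy {Δ : Set Formula} (hΔ : PrimeTheory Δ) : (mkW hΔ).1.1 = Δ := rfl

lemma extendWorld (p : CanW) {Δ : Set Formula} (hΔ : PrimeTheory Δ)
    (hsub : p.1.1 ⊆ Δ) : ∃ q : CanW, q.1.1 = Δ ∧ canLe p q := by
  by_cases h : MaxPrime Δ
  · exact ⟨⟨(Δ, p.1.2), hΔ, fun h' => absurd h h'⟩, rfl, hsub, le_rfl⟩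
  · have hn : p.1.2 = 0 := p.2.2 (fun hmax => h (hmax.2 Δ hΔ hsub ▸ hmax))
    exact ⟨mkW hΔ, rfl, hsub, by omega⟩

lemma exists_gt (p : CanW) : ∃ q : CanW, canLe p q ∧ q ≠ p := by
  by_cases h : MaxPrime p.1.1
  · refine ⟨⟨(p.1.1, p.1.2 + 1), p.2.1, fun h' => absurd h h'⟩,
      ⟨subset_rfl, Nat.le_succ _⟩, fun he => ?_⟩
    have := congrArg (fun q : CanW => q.1.2) he
    simp at this
  · have hprime := p.2.1
    have hn : p.1.2 = 0 := p.2.2 h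
    rw [MaxPrime, not_and] at h
    push_neg at h
    obtain ⟨Δ, hΔ, hsub, hne⟩ := h hprime
    refine ⟨mkW hΔ, ⟨hsub, by omega⟩, fun he => hne ?_⟩
    have := congrArg (fun q : CanW => q.1.1) he
    simpa [mkW] using this

end IMPaper
namespace IMPaper

/-- Truth lemma for the canonical model of IMCalc:
φ ∈ Γ iff M_{IMCalc},(Γ,n) ⊩ φ. -/
theorem canonical_truth_lemma (p : CanW) (φ : Formula) :
    φ ∈ p.1.1 ↔ canStruct.sat φ p := by
  induction φ generalizing p with
  | prop i => exact Iff.rfl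
  | bot => simpa [INStruct.sat] using p.2.1.2.2
  | and φ ψ ihφ ihψ =>
    simp only [INStruct.sat]
    rw [prime_and p.2.1, ihφ, ihψ]
  | or φ ψ ihφ ihψ =>
    simp only [INStruct.sat]
    rw [prime_or p.2.1, ihφ, ihψ]
  | imp φ ψ ihφ ihψ =>
    simp only [INStruct.sat]
    constructor
    · intro h q hle hφ
      exact (ihψ q).mp (prime_mp q.2.1 (hle.1 h) ((ihφ q).mpr hφ))
    · intro h
      by_contra hmem
      have h2 : ¬ IMC (insert φ p.1.1) ψ := fun hd =>
        hmem (p.2.1.1 _ (deduction hd))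
      obtain ⟨Δ, hsub, hΔ, hψ⟩ := lindenbaum h2
      obtain ⟨q, hq, hle⟩ := extendWorld p hΔ
        (fun x hx => hsub (Set.mem_insert_of_mem _ hx))
      have hφq : φ ∈ q.1.1 := by rw [hq]; exact hsub (Set.mem_insert _ _)
      have := (ihψ q).mpr (h q hle ((ihφ q).mp hφq))
      rw [hq] at this
      exact hψ this
  | box φ ihφ =>
    constructor
    · intro h
      refine ⟨canA φ, Or.inl ⟨φ, rfl⟩, h, fun w' _ v hv => (ihφ v).mp hv⟩
    · rintro ⟨a, (⟨χ, rfl⟩ | ⟨ψ, Δm, hdia, hbt, rfl⟩), hdom, hval⟩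
      · have key : IMC (insert χ ∅) φ := by
          by_contra hk
          obtain ⟨Δ, hsub, hΔ, hφ⟩ := lindenbaum hk
          have hsat := hval p (canLe_refl p) (mkW hΔ)
            (hsub (Set.mem_insert _ _))
          exact hφ ((ihφ _).mpr hsat)
        exact p.2.1.1 _ (.mp (.el hdom) (.monBox (deduction key)))
      · have hd : canLe Δm p := hdom
        obtain ⟨w', hw'le, hw'ne⟩ : ∃ w', canLe p w' ∧ w' ≠ Δm := by
          by_cases he : p = Δm
          · obtain ⟨q, hq, hne⟩ := exists_gt p
            exact ⟨q, hq, he ▸ hne⟩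
          · exact ⟨p, canLe_refl p, he⟩
        have key : IMC ∅ φ := by
          by_contra hk
          obtain ⟨Δ, _, hΔ, hφ⟩ := lindenbaum hk
          have hsat := hval w' hw'le (mkW hΔ) (fun he => absurd he hw'ne)
          exact hφ ((ihφ _).mpr hsat)
        have h1 : GHC IMAx ∅ (Formula.top.imp φ) := .mp key axK
        exact p.2.1.1 _ (.mp (.el (hd.1 hbt)) (.monBox h1))
  | dia φ ihφ =>
    constructor
    · rintro h w' hle a (⟨χ, rfl⟩ | ⟨ψ, Δm, hdia, hbt, rfl⟩) hdom
      · have hdi : Formula.dia φ ∈ w'.1.1 := hle.1 h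
        have hcon : ¬ IMC (insert χ (insert φ ∅)) .bot := by
          intro hk
          have h1 : GHC IMAx ∅ (φ.imp χ.neg) := deduction (deduction hk)
          have h3 : Formula.dia χ.neg ∈ w'.1.1 :=
            w'.2.1.1 _ (.mp (.el hdi) (.monDia h1))
          have h4 : (Formula.box χ).and (Formula.dia χ.neg) ∈ w'.1.1 :=
            (prime_and w'.2.1).mpr ⟨hdom, h3⟩
          exact w'.2.1.2.2 (w'.2.1.1 _ (.mp (.el h4) axNegA))
        obtain ⟨Δ, hsub, hΔ, _⟩ := lindenbaum hcon
        exact ⟨mkW hΔ, hsub (Set.mem_insert _ _),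
          (ihφ _).mp (hsub (Set.mem_insert_of_mem _ (Set.mem_insert _ _)))⟩
      · have hdi : Formula.dia φ ∈ w'.1.1 := hle.1 h
        by_cases he : w' = Δm
        · have hk : ¬ IMC (insert φ ∅) ψ := by
            intro hk
            have h2 : Formula.dia ψ ∈ Δm.1.1 :=
              Δm.2.1.1 _ (.mp (.el (he ▸ hdi)) (.monDia (deduction hk)))
            exact hdia h2
          obtain ⟨Δ, hsub, hΔ, hψ⟩ := lindenbaum hk
          exact ⟨mkW hΔ, fun _ => hψ, (ihφ _).mp (hsub (Set.mem_insert _ _))⟩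
        · have hk : ¬ IMC (insert φ ∅) .bot := by
            intro hk
            have h1 := deduction hk
            have h2 : GHC IMAx ∅ (φ.imp Formula.top.neg) :=
              deduction (.mp (.mp (.el (Set.mem_insert _ _))
                (weaken h1 (Set.empty_subset _))) axEfq)
            have h3 : Formula.dia Formula.top.neg ∈ w'.1.1 :=
              w'.2.1.1 _ (.mp (.el hdi) (.monDia h2))
            have h4 : (Formula.box Formula.top).and (Formula.dia Formula.top.neg) ∈ w'.1.1 :=
              (prime_and w'.2.1).mpr ⟨hdom.1 hbt, h3⟩
            exact w'.2.1.2.2 (w'.2.1.1 _ (.mp (.el h4) axNegA))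
          obtain ⟨Δ, hsub, hΔ, _⟩ := lindenbaum hk
          exact ⟨mkW hΔ, fun hh => absurd hh he,
            (ihφ _).mp (hsub (Set.mem_insert _ _))⟩
    · intro h
      by_contra hmem
      have h1 : ¬ IMC (insert (Formula.box Formula.top) p.1.1) (Formula.dia φ) := by
        intro hk
        exact hmem (p.2.1.1 _ (.mp (deduction hk) axIDia))
      obtain ⟨Δ, hsub, hΔ, hdia⟩ := lindenbaum h1
      obtain ⟨q, hq, hle⟩ := extendWorld p hΔ
        (fun x hx => hsub (Set.mem_insert_of_mem _ hx))
      have hbt : Formula.box Formula.top ∈ q.1.1 := by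
        rw [hq]; exact hsub (Set.mem_insert _ _)
      have hdq : Formula.dia φ ∉ q.1.1 := by rw [hq]; exact hdia
      obtain ⟨v, hv, hsat⟩ := h q hle (canB φ q)
        (Or.inr ⟨φ, q, hdq, hbt, rfl⟩) (canLe_refl q)
      exact (hv rfl) ((ihφ v).mpr hsat)

end IMPaper
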